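/- arXiv:2204.03726 — 2 statements merged into one kernel-verified Lean document; each statement's English description precedes it below -/
import Mathlib

section
/- Suppose each F_i : R^n → R is convex and differentiable with ‖∇F_i(w)‖_2 ≤ L for all w, and F(w) = (1/m) Σ_i F_i(w). If w̄^(k+1) = w̄^(k) - (α^(k)/m) Σ_j ∇F_j(w_j^(k)), then for every y ∈ R^n: ‖w̄^(k+1) - y‖² ≤ ‖w̄^(k) - y‖² - (2α^(k)/m) Σ_j (F_j(w_j^(k)) + ∇F_j(w_j^(k))·(w̄^(k) - w_j^(k)) - F_j(y)) + (α^(k))² L². -/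
/-!
A convex differentiable function lies above its tangent planes, so each linearization
`F j (w j) + ⟪∇F j (w j), w̄ - w j⟫` at `w̄` exceeds `F j y` by at most `⟪∇F j (w j), w̄ - y⟫`.
Expanding `‖w̄ - (α/m) • ∑ⱼ ∇F j (w j) - y‖²` therefore bounds the cross term by this sum,
while the quadratic term is at most `α² L²` because the averaged gradient has norm at most `L`.
-/

open RealInnerProductSpace

theorem ConvexOn.add_fderiv_sub_le {E : Type*} [NormedAddCommGroup E] [NormedSpace ℝ E]
    {s : Set E} {f : E → ℝ} {f' : E →L[ℝ] ℝ} {x y : E} (hf : ConvexOn ℝ s f)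
    (hx : x ∈ s) (hy : y ∈ s) (hf' : HasFDerivAt f f' x) :
    f x + f' (y - x) ≤ f y := by
  -- restrict `f` to the segment `[x, y]` and use the one-variable tangent-line bound there
  have hline : ConvexOn ℝ (Set.Icc 0 1) (f ∘ AffineMap.lineMap (k := ℝ) x y) :=
    (hf.comp_affineMap _).subset (fun t ht => hf.1.lineMap_mem hx hy ht) (convex_Icc 0 1)
  have hderiv : HasDerivAt (f ∘ AffineMap.lineMap (k := ℝ) x y) (f' (y - x)) 0 := by
    refine HasFDerivAt.comp_hasDerivAt _ ?_ AffineMap.hasDerivAt_lineMap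
    rwa [AffineMap.lineMap_apply_zero]
  have hslope := hline.le_slope_of_hasDerivAt (by simp) (by simp) zero_lt_one hderiv
  simp only [slope_def_field, Function.comp_apply, AffineMap.lineMap_apply_zero,
    AffineMap.lineMap_apply_one, sub_zero, div_one] at hslope
  linarith

theorem ConvexOn.add_inner_sub_le_of_hasGradientAt {E : Type*} [NormedAddCommGroup E]
    [InnerProductSpace ℝ E] [CompleteSpace E] {s : Set E} {f : E → ℝ} {g x y : E}
    (hf : ConvexOn ℝ s f) (hx : x ∈ s) (hy : y ∈ s) (hg : HasGradientAt f g x) :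
    f x + ⟪g, y - x⟫ ≤ f y :=
  hf.add_fderiv_sub_le hx hy (hasGradientAt_iff_hasFDerivAt.mp hg)

theorem norm_sub_smul_sub_sq_le {E : Type*} [NormedAddCommGroup E] [InnerProductSpace ℝ E]
    {a v y : E} {c B D : ℝ} (hc : 0 ≤ c) (hv : ‖c • v‖ ≤ B) (hD : D ≤ ⟪v, a - y⟫) :
    ‖a - c • v - y‖ ^ 2 ≤ ‖a - y‖ ^ 2 - 2 * c * D + B ^ 2 := by
  have hexpand : ‖a - c • v - y‖ ^ 2 = ‖a - y‖ ^ 2 - 2 * c * ⟪v, a - y⟫ + ‖c • v‖ ^ 2 := by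
    rw [sub_right_comm, norm_sub_sq_real, real_inner_smul_right, real_inner_comm]
    ring
  have hsq : ‖c • v‖ ^ 2 ≤ B ^ 2 := pow_le_pow_left₀ (norm_nonneg _) hv 2
  nlinarith [mul_le_mul_of_nonneg_left hD hc]

theorem norm_div_card_smul_sum_le {ι E : Type*} [SeminormedAddCommGroup E] [NormedSpace ℝ E]
    {s : Finset ι} (hs : s.Nonempty) {v : ι → E} {c L : ℝ} (hc : 0 ≤ c)
    (hv : ∀ i ∈ s, ‖v i‖ ≤ L) : ‖(c / s.card) • ∑ i ∈ s, v i‖ ≤ c * L := by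
  have hcard : (0 : ℝ) < s.card := by exact_mod_cast hs.card_pos
  calc ‖(c / s.card) • ∑ i ∈ s, v i‖
      = c / s.card * ‖∑ i ∈ s, v i‖ := by rw [norm_smul, Real.norm_of_nonneg (by positivity)]
    _ ≤ c / s.card * (s.card * L) := by
      gcongr
      simpa using norm_sum_le_of_le s hv
    _ = c * L := by field_simp

theorem sum_linearization_sub_le_inner_sum {ι E : Type*} [NormedAddCommGroup E]
    [InnerProductSpace ℝ E] (s : Finset ι) {f : ι → E → ℝ} {g w : ι → E} {z y : E}
    (hf : ∀ i ∈ s, f i (w i) + ⟪g i, y - w i⟫ ≤ f i y) :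
    ∑ i ∈ s, (f i (w i) + ⟪g i, z - w i⟫ - f i y) ≤ ⟪∑ i ∈ s, g i, z - y⟫ := by
  rw [sum_inner]
  refine Finset.sum_le_sum fun i hi => ?_
  have hsplit : ⟪g i, z - w i⟫ = ⟪g i, z - y⟫ + ⟪g i, y - w i⟫ := by
    rw [← inner_add_right, sub_add_sub_cancel]
  linarith [hf i hi]

open RealInnerProductSpace in
theorem stmt8_general (n m : ℕ) (F : Fin m → EuclideanSpace ℝ (Fin n) → ℝ)
    (gF : Fin m → EuclideanSpace ℝ (Fin n) → EuclideanSpace ℝ (Fin n))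
    (L : ℝ)
    (hconv : ∀ j, ConvexOn ℝ Set.univ (F j))
    (hgrad : ∀ j w, HasGradientAt (F j) (gF j w) w)
    (hbound : ∀ j w, ‖gF j w‖ ≤ L)
    (α : ℝ) (hα : 0 < α) (hm : 0 < m)
    (w : Fin m → EuclideanSpace ℝ (Fin n))
    (wbar wbar' : EuclideanSpace ℝ (Fin n))
    (hupd : wbar' = wbar - (α / m) • ∑ j, gF j (w j)) :
    ∀ y : EuclideanSpace ℝ (Fin n),
      ‖wbar' - y‖ ^ 2 ≤ ‖wbar - y‖ ^ 2
        - (2 * α / m) * ∑ j, (F j (w j) + ⟪gF j (w j), wbar - w j⟫ - F j y)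
        + α ^ 2 * L ^ 2 := by
  intro y
  have hstep : ‖(α / m) • ∑ j, gF j (w j)‖ ≤ α * L := by
    have hne : (Finset.univ : Finset (Fin m)).Nonempty := Finset.univ_nonempty_iff.mpr ⟨⟨0, hm⟩⟩
    simpa using norm_div_card_smul_sum_le hne hα.le fun j _ => hbound j (w j)
  have hcross := sum_linearization_sub_le_inner_sum Finset.univ (z := wbar) fun j _ =>
    (hconv j).add_inner_sub_le_of_hasGradientAt (Set.mem_univ _) (Set.mem_univ y) (hgrad j (w j))
  rw [hupd, mul_div_assoc, ← mul_pow]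
  exact norm_sub_smul_sub_sq_le (by positivity) hstep hcross

open RealInnerProductSpace in
/-- Key descent inequality: for convex differentiable `F_j` with gradients bounded
by `L`, and `w̄' = w̄ - (α/m) ∑ⱼ ∇F_j(w_j)`, for every `y`:
`‖w̄' - y‖² ≤ ‖w̄ - y‖² - (2α/m) ∑ⱼ (F_j(w_j) + ⟪∇F_j(w_j), w̄ - w_j⟫ - F_j(y)) + α²L²`. -/
theorem stmt8 (n m : ℕ) (F : Fin m → EuclideanSpace ℝ (Fin n) → ℝ)
    (gF : Fin m → EuclideanSpace ℝ (Fin n) → EuclideanSpace ℝ (Fin n))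
    (L : ℝ) (hL : 0 < L)
    (hconv : ∀ j, ConvexOn ℝ Set.univ (F j))
    (hgrad : ∀ j w, HasGradientAt (F j) (gF j w) w)
    (hbound : ∀ j w, ‖gF j w‖ ≤ L)
    (α : ℝ) (hα : 0 < α) (hm : 0 < m)
    (w : Fin m → EuclideanSpace ℝ (Fin n))
    (wbar wbar' : EuclideanSpace ℝ (Fin n))
    (hupd : wbar' = wbar - (α / m) • ∑ j, gF j (w j)) :
    ∀ y : EuclideanSpace ℝ (Fin n),
      ‖wbar' - y‖ ^ 2 ≤ ‖wbar - y‖ ^ 2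
        - (2 * α / m) * ∑ j, (F j (w j) + ⟪gF j (w j), wbar - w j⟫ - F j y)
        + α ^ 2 * L ^ 2 :=
  stmt8_general n m F gF L hconv hgrad hbound α hα hm w wbar wbar' hupd
end

section
/- If for every k ≥ 0 the union graph G^(k:k+B₁-1) = (M, ∪_{s=0}^{B₁-1} E^(k+s)) is connected, and every node broadcasts at least once in every B₂ consecutive iterations, then with B = (l+2)B₁ where l B₁ < B₂ ≤ (l+1)B₁, the information-flow union graph over any window of B consecutive iterations is connected, provided each newly connected pair exchanges parameters upon connection. -/
/-- If every `B₁`-window union of the physical graph is connected, every node broadcasts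
at least once in every `B₂` consecutive iterations, and newly connected pairs exchange
parameters, then with `B = (l+2)B₁` where `lB₁ < B₂ ≤ (l+1)B₁`, every `B`-window union
of the information-flow graph is connected. -/
theorem stmt18 (m : ℕ) (hm : 0 < m)
    (G G' : ℕ → SimpleGraph (Fin m))
    (v : Fin m → ℕ → Prop)
    (B₁ B₂ l B : ℕ) (hB₁ : 1 ≤ B₁) (hB₂ : 1 ≤ B₂)
    (hl : l * B₁ < B₂ ∧ B₂ ≤ (l + 1) * B₁) (hB : B = (l + 2) * B₁)
    (hconn : ∀ k, (⨆ t : Fin B₁, G (k + t)).Connected)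
    (hbroadcast : ∀ i k, ∃ t < B₂, v i (k + t))
    (hsub : ∀ k, G' k ≤ G k)
    (hflow : ∀ k i j, (G k).Adj i j → (v i k ∨ v j k) → (G' k).Adj i j)
    (hnew0 : ∀ i j, (G 0).Adj i j → (G' 0).Adj i j)
    (hnew : ∀ k i j, (G (k + 1)).Adj i j → ¬ (G k).Adj i j → (G' (k + 1)).Adj i j) :
    ∀ k, (⨆ t : Fin B, G' (k + t)).Connected := by
  classical
  intro k
  obtain ⟨a, ha⟩ : ∃ a, (l + 1) * B₁ = a := ⟨_, rfl⟩
  have hB₂a : B₂ ≤ a := by rw [← ha]; exact hl.2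
  have hBa : B = a + B₁ := by rw [hB, ← ha]; ring
  have hWconn := hconn (k + a)
  refine SimpleGraph.Connected.mono ?_ hWconn
  intro i j hadj
  rw [SimpleGraph.iSup_adj] at hadj
  obtain ⟨⟨s, hs⟩, hadj⟩ := hadj
  simp only at hadj
  -- t is a time in the last B₁-window where (i,j) is an edge of G
  set t := k + a + s with ht
  have hex : ∃ r, ∀ x, r ≤ x → x ≤ t → (G x).Adj i j :=
    ⟨t, fun x h1 h2 => by rwa [le_antisymm h2 h1]⟩
  set r := Nat.find hex with hr
  have hQ : ∀ x, r ≤ x → x ≤ t → (G x).Adj i j := Nat.find_spec hex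
  have hrt : r ≤ t := Nat.find_le (fun x h1 h2 => by rwa [le_antisymm h2 h1])
  by_cases hrk : r ≤ k
  · -- edge persists on [k, t]; a broadcast of i in (k, t] puts it in G'
    obtain ⟨d, hd, hv⟩ := hbroadcast i (t - B₂ + 1)
    set u := t - B₂ + 1 + d with hu
    have hut : u ≤ t := by omega
    have hadju : (G u).Adj i j := hQ u (by omega) hut
    have h' : (G' u).Adj i j := hflow u i j hadju (Or.inl hv)
    have hub : u - k < B := by omega
    have huk : u = k + (u - k) := by omega
    rw [huk] at h'
    exact le_iSup (fun t : Fin B => G' (k + t)) ⟨u - k, hub⟩ h'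
  · -- edge newly appears at time r ∈ (k, t]
    push_neg at hrk
    have hr1 : 1 ≤ r := by omega
    have hnot := Nat.find_min hex (m := r - 1) (by omega)
    push_neg at hnot
    obtain ⟨x, hx1, hx2, hx3⟩ := hnot
    have hxr : x = r - 1 := by
      by_contra hne
      exact hx3 (hQ x (by omega) hx2)
    subst hxr
    have hadjr : (G r).Adj i j := hQ r le_rfl hrt
    have hrr : r - 1 + 1 = r := by omega
    have h' : (G' r).Adj i j := by
      have := hnew (r - 1) i j (by rw [hrr]; exact hadjr) hx3
      rwa [hrr] at this
    have hrb : r - k < B := by omega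
    have hrk' : r = k + (r - k) := by omega
    rw [hrk'] at h'
    exact le_iSup (fun t : Fin B => G' (k + t)) ⟨r - k, hrb⟩ h'
end
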